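/- Let n, q ≥ 1, A ∈ ℝ^{n×n}, B ∈ ℝ^{n×q}, C ∈ ℝ^{q×n}, L ∈ ℝ^{n×q}, and define F11 := A + BC, F12 := B, F21 := −C(A + BC), F22 := −CB, and the block matrix M := [[F11, F12, LC], [F21, F22, −CLC], [0, 0, A − LC]] ∈ ℝ^{(2n+q)×(2n+q)}, together with the output matrix H := [[Iₙ, 0, 0], [0, 0, Iₙ]] ∈ ℝ^{2n×(2n+q)}. If B has full column rank (rank B = q), then for every s ∈ ℂ, the complex matrix obtained by stacking M − s·I_{2n+q} on top of H has rank 2n + q; that is, the pair (H, M) is observable. -/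

import Mathlib

/-! A vector `(x, e, η)` in the kernel of the stacked matrix is annihilated by `H`, so `x = 0` and
`η = 0`; the first block row of `M - sI` then reduces to `B e = 0`, and `e = 0` because `B` has
trivial kernel, over `ℂ` as over `ℝ`. Trivial kernel of the stack means full column rank. -/

open Matrix Function

namespace Matrix

theorem rank_eq_card_iff_mulVec_injective {m n K : Type*} [Fintype n] [Field K]
    (A : Matrix m n K) : A.rank = Fintype.card n ↔ Injective A.mulVec := by
  rw [mulVec_injective_iff, linearIndependent_iff_card_eq_finrank_span, rank_eq_finrank_span_cols,
    Set.finrank, eq_comm]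

theorem mulVec_map_algebraMap_injective {m n R S : Type*} [Finite m] [Fintype n] [CommRing R]
    [CommRing S] [Algebra R S] [FaithfulSMul R S] [IsDomain S] {B : Matrix m n R}
    (hB : Injective B.mulVec) : Injective (B.map (algebraMap R S)).mulVec := by
  rw [mulVec_injective_iff] at hB ⊢
  exact linearIndependent_algebraMap_comp_iff.2 hB

theorem mulVec_fromRows_sub_smul_one_injective {K m p : Type*} [CommRing K] [Fintype m]
    [Fintype p] [DecidableEq m] [DecidableEq p]
    {F₁₁ : Matrix m m K} {F₁₂ : Matrix m p K} {F₂₁ : Matrix p m K} {F₂₂ : Matrix p p K}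
    {G₁ : Matrix m m K} {G₂ : Matrix p m K} {G₃ : Matrix m m K} (s : K)
    (hF₁₂ : Injective F₁₂.mulVec) :
    Injective (fromRows
      (fromBlocks (fromBlocks F₁₁ F₁₂ F₂₁ F₂₂) (fromRows G₁ G₂) 0 G₃ - s • 1)
      (fromBlocks (fromCols (1 : Matrix m m K) 0) 0 0 (1 : Matrix m m K))).mulVec := by
  refine (injective_iff_map_eq_zero (mulVecLin _)).2 fun v hv => ?_
  obtain ⟨x, e, η, rfl⟩ : ∃ x e η, v = Sum.elim (Sum.elim x e) η :=
    ⟨_, _, _, by ext ((i | i) | i) <;> rfl⟩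
  simp only [mulVecLin_apply, fromRows_mulVec, sub_mulVec, fromBlocks_mulVec, Sum.elim_comp_inl,
    Sum.elim_comp_inr, zero_mulVec, zero_add, fromCols_mulVec, one_mulVec, add_zero, smul_mulVec,
    ← Sum.elim_add_add, ← Sum.elim_zero_zero, Sum.elim_eq_iff] at hv
  obtain ⟨hM, rfl, rfl⟩ := hv
  have he : F₁₂ *ᵥ e = 0 := funext fun i => by simpa using congrFun hM (Sum.inl (Sum.inl i))
  rw [hF₁₂ (he.trans (mulVec_zero F₁₂).symm), Sum.elim_zero_zero, Sum.elim_zero_zero]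

end Matrix

theorem stmt_15_general (n q : ℕ)
    (A : Matrix (Fin n) (Fin n) ℝ) (B : Matrix (Fin n) (Fin q) ℝ)
    (C : Matrix (Fin q) (Fin n) ℝ) (L : Matrix (Fin n) (Fin q) ℝ)
    (hB : B.rank = q) :
    ∀ s : ℂ,
      (Matrix.fromRows
        ((Matrix.fromBlocks
            (Matrix.fromBlocks (A + B * C) B (-(C * (A + B * C))) (-(C * B)))
            (Matrix.fromRows (L * C) (-(C * L * C)))
            (0 : Matrix (Fin n) (Fin n ⊕ Fin q) ℝ)
            (A - L * C)).map Complex.ofReal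
          - s • (1 : Matrix ((Fin n ⊕ Fin q) ⊕ Fin n) ((Fin n ⊕ Fin q) ⊕ Fin n) ℂ))
        ((Matrix.fromBlocks
            (Matrix.fromCols (1 : Matrix (Fin n) (Fin n) ℝ)
              (0 : Matrix (Fin n) (Fin q) ℝ))
            (0 : Matrix (Fin n) (Fin n) ℝ)
            (0 : Matrix (Fin n) (Fin n ⊕ Fin q) ℝ)
            (1 : Matrix (Fin n) (Fin n) ℝ)).map Complex.ofReal)).rank
      = 2 * n + q := by
  intro s
  have hBℂ : Injective (B.map Complex.ofReal).mulVec :=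
    mulVec_map_algebraMap_injective <| (rank_eq_card_iff_mulVec_injective B).1 (by simpa using hB)
  rw [(rank_eq_card_iff_mulVec_injective _).2]
  · simp only [Fintype.card_sum, Fintype.card_fin]
    ring
  simp only [fromBlocks_map, fromRows_map, fromCols_map, Matrix.map_zero _ Complex.ofReal_zero,
    Matrix.map_one _ Complex.ofReal_zero Complex.ofReal_one]
  exact mulVec_fromRows_sub_smul_one_injective s hBℂ

/-- Observability of the pair `(H, M)` for the output-feedback
transmission-lazy closed loop, where
`M = [[F11, F12, LC], [F21, F22, -CLC], [0, 0, A - LC]]` (with `F11 = A+BC`,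
`F12 = B`, `F21 = -C(A+BC)`, `F22 = -CB`) and `H = [[Iₙ,0,0],[0,0,Iₙ]]`:
if `B` has full column rank then for every `s ∈ ℂ` the matrix obtained by
stacking `M - sI` on top of `H` has rank `2n + q` (PBH test). -/
theorem stmt_15 (n q : ℕ) (hn : 1 ≤ n) (hq : 1 ≤ q)
    (A : Matrix (Fin n) (Fin n) ℝ) (B : Matrix (Fin n) (Fin q) ℝ)
    (C : Matrix (Fin q) (Fin n) ℝ) (L : Matrix (Fin n) (Fin q) ℝ)
    (hB : B.rank = q) :
    ∀ s : ℂ,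
      (Matrix.fromRows
        ((Matrix.fromBlocks
            (Matrix.fromBlocks (A + B * C) B (-(C * (A + B * C))) (-(C * B)))
            (Matrix.fromRows (L * C) (-(C * L * C)))
            (0 : Matrix (Fin n) (Fin n ⊕ Fin q) ℝ)
            (A - L * C)).map Complex.ofReal
          - s • (1 : Matrix ((Fin n ⊕ Fin q) ⊕ Fin n) ((Fin n ⊕ Fin q) ⊕ Fin n) ℂ))
        ((Matrix.fromBlocks
            (Matrix.fromCols (1 : Matrix (Fin n) (Fin n) ℝ)
              (0 : Matrix (Fin n) (Fin q) ℝ))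
            (0 : Matrix (Fin n) (Fin n) ℝ)
            (0 : Matrix (Fin n) (Fin n ⊕ Fin q) ℝ)
            (1 : Matrix (Fin n) (Fin n) ℝ)).map Complex.ofReal)).rank
      = 2 * n + q :=
  stmt_15_general n q A B C L hB
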